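/- arXiv:math/9404226 — 3 statements merged into one kernel-verified Lean document; each statement's English description precedes it below -/
import Mathlib

section
/- Let (A_i)_{i∈κ} be a family of Boolean algebras, D an ultrafilter on κ, and A = ∏_{i∈κ} A_i / D the Boolean ultraproduct. Then the algebraic density π(A) is at most the cardinality of the ultraproduct ∏_{i∈κ} π(A_i) / D of the cardinals π(A_i). -/
open Cardinal

universe u v

/-- The algebraic density `π A` of a Boolean algebra: the least cardinality of a
dense subset of `A \ {⊥}`. -/
noncomputable def piDensity (A : Type v) [BooleanAlgebra A] : Cardinal.{v} :=
  sInf {c | ∃ X : Set A, (∀ x ∈ X, x ≠ ⊥) ∧ (∀ a : A, a ≠ ⊥ → ∃ x ∈ X, x ≤ a) ∧ c = #X}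

section BUP

variable {ι : Type u} (D : Ultrafilter ι) (A : ι → Type u) [∀ i, BooleanAlgebra (A i)]

instance piBooleanRing : BooleanRing (∀ i, AsBoolRing (A i)) :=
  { Pi.ring with isIdempotentElem := fun f => funext fun i => BooleanRing.mul_self (f i) }

/-- The ideal of elements vanishing `D`-almost everywhere. -/
def upIdeal : Ideal (∀ i, AsBoolRing (A i)) where
  carrier := {f | {i | f i = 0} ∈ D}
  zero_mem' := by
    have : {i | (0 : ∀ i, AsBoolRing (A i)) i = 0} = Set.univ := by ext i; simp
    simp only [Set.mem_setOf_eq] at *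
    exact this ▸ Filter.univ_mem
  add_mem' := by
    intro f g hf hg
    filter_upwards [hf, hg] with i h1 h2
    simp only [Pi.add_apply, h1, h2, add_zero]
  smul_mem' := by
    intro c f hf
    filter_upwards [hf] with i h1
    simp only [smul_eq_mul, Pi.mul_apply, h1, mul_zero]

instance upQuotBooleanRing : BooleanRing ((∀ i, AsBoolRing (A i)) ⧸ upIdeal D A) :=
  { (inferInstance : CommRing ((∀ i, AsBoolRing (A i)) ⧸ upIdeal D A)) with
    isIdempotentElem := fun a => by
      obtain ⟨f, rfl⟩ := Ideal.Quotient.mk_surjective a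
      rw [IsIdempotentElem, ← map_mul, BooleanRing.mul_self] }

/-- The Boolean ultraproduct `∏ᵢ Aᵢ / D`. -/
def BUP : Type u := AsBoolAlg ((∀ i, AsBoolRing (A i)) ⧸ upIdeal D A)

noncomputable instance : BooleanAlgebra (BUP D A) :=
  inferInstanceAs (BooleanAlgebra (AsBoolAlg _))

end BUP

section cardUP

variable {ι : Type u} (D : Ultrafilter ι)

/-- Set-theoretic ultraproduct of a family of cardinals, seen as the quotient of the
product of the corresponding sets of ordinals by `D`-almost-everywhere equality. -/
def cardSetoid (lam : ι → Cardinal.{u}) :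
    Setoid (∀ i, (lam i).ord.ToType) where
  r f g := {i | f i = g i} ∈ D
  iseqv := by
    refine ⟨fun f => by
      have : {i | f i = f i} = Set.univ := by ext i; simp
      rw [this]; exact Filter.univ_mem, fun {f g} h => ?_, fun {f g h} h1 h2 => ?_⟩
    · filter_upwards [h] with i hi using hi.symm
    · filter_upwards [h1, h2] with i hi1 hi2 using hi1.trans hi2

/-- The cardinality of the ultraproduct `∏ᵢ λᵢ / D` of a family of cardinals. -/
noncomputable def cardUP (lam : ι → Cardinal.{u}) : Cardinal.{u} :=
  #(Quotient (cardSetoid D lam))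

end cardUP

/-! Fix for every `i` a dense family `Fᵢ` of nonzero elements of `Aᵢ` indexed by the ordinals
below `π(Aᵢ)`. Sending the `D`-class of a choice function `f` to the class of `(Fᵢ (f i))ᵢ` is
well defined, never hits `⊥` (a `D`-large set of coordinates would have to be `⊥`), and has dense
range: below a nonzero class `[g]` lies `[(Fᵢ (f i))ᵢ]` for any `f` with `Fᵢ (f i) ≤ gᵢ` on the
`D`-large set where `gᵢ ≠ ⊥`. -/

def IsDenseFamily {A : Type v} {β : Type*} [BooleanAlgebra A] (F : β → A) : Prop :=
  (∀ b, F b ≠ ⊥) ∧ ∀ a, a ≠ ⊥ → ∃ b, F b ≤ a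

namespace IsDenseFamily

variable {A : Type v} [BooleanAlgebra A]

theorem piDensity_le_mk {β : Type v} {F : β → A} (hF : IsDenseFamily F) :
    piDensity A ≤ #β := by
  refine le_trans (csInf_le' ⟨Set.range F, ?_, ?_, rfl⟩) Cardinal.mk_range_le
  · rintro _ ⟨b, rfl⟩
    exact hF.1 b
  · intro a ha
    obtain ⟨b, hb⟩ := hF.2 a ha
    exact ⟨F b, ⟨b, rfl⟩, hb⟩

theorem nonempty [Nontrivial A] {β : Type*} {F : β → A} (hF : IsDenseFamily F) : Nonempty β :=
  (hF.2 ⊤ top_ne_bot).nonempty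

theorem exists_selector_le {β : Type*} [Nonempty β] {F : β → A} (hF : IsDenseFamily F) :
    ∃ r : A → β, ∀ a, a ≠ ⊥ → F (r a) ≤ a := by
  classical
  have hr : ∀ a, ∃ b, a ≠ ⊥ → F b ≤ a := fun a =>
    if ha : a = ⊥ then ⟨Classical.arbitrary β, absurd ha⟩
    else (hF.2 a ha).imp fun _ hb _ => hb
  choose r hr using hr
  exact ⟨r, hr⟩

theorem of_comp {β γ : Type*} {F : γ → A} {q : β → γ} (hq : q.Surjective)
    (hF : IsDenseFamily (F ∘ q)) : IsDenseFamily F := by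
  refine ⟨hq.forall.2 hF.1, fun a ha => ?_⟩
  obtain ⟨b, hb⟩ := hF.2 a ha
  exact ⟨q b, hb⟩

end IsDenseFamily

theorem exists_isDenseFamily_toType_ord_piDensity (A : Type v) [BooleanAlgebra A] :
    ∃ F : (piDensity A).ord.ToType → A, IsDenseFamily F := by
  have hne : {c | ∃ X : Set A, (∀ x ∈ X, x ≠ ⊥) ∧
      (∀ a : A, a ≠ ⊥ → ∃ x ∈ X, x ≤ a) ∧ c = #X}.Nonempty :=
    ⟨_, {a | a ≠ ⊥}, fun _ hx => hx, fun a ha => ⟨a, ha, le_rfl⟩, rfl⟩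
  obtain ⟨X, hX, hXdense, hXcard⟩ := csInf_mem hne
  obtain ⟨e⟩ : Nonempty ((piDensity A).ord.ToType ≃ X) :=
    Cardinal.eq.1 ((Cardinal.mk_toType _).trans ((Cardinal.card_ord _).trans hXcard))
  refine ⟨fun b => e b, fun b => hX _ (e b).2, fun a ha => ?_⟩
  obtain ⟨x, hx, hxa⟩ := hXdense a ha
  exact ⟨e.symm ⟨x, hx⟩, by simpa using hxa⟩

namespace BUP

variable {ι : Type u} (D : Ultrafilter ι) {A : ι → Type u} [∀ i, BooleanAlgebra (A i)]

def mk (f : ∀ i, A i) : BUP D A :=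
  toBoolAlg (Ideal.Quotient.mk (upIdeal D A) fun i => toBoolRing (f i))

variable {D}

theorem mk_surjective : Function.Surjective (mk D (A := A)) := by
  intro a
  obtain ⟨f, hf⟩ := Ideal.Quotient.mk_surjective (ofBoolAlg a)
  refine ⟨fun i => ofBoolRing (f i), ?_⟩
  simp only [mk, toBoolRing_ofBoolRing, hf]
  exact toBoolAlg_ofBoolAlg a

theorem mk_eq_mk_iff {f g : ∀ i, A i} : mk D f = mk D g ↔ ∀ᶠ i in D, f i = g i := by
  refine toBoolAlg_inj.trans ?_
  rw [Ideal.Quotient.eq]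
  show {i | toBoolRing (f i) - toBoolRing (g i) = 0} ∈ D ↔ _
  simp only [sub_eq_zero, toBoolRing_inj]
  rfl

theorem mk_inf (f g : ∀ i, A i) : mk D f ⊓ mk D g = mk D (f ⊓ g) :=
  (toBoolAlg_mul _ _).symm

theorem mk_le_mk_iff {f g : ∀ i, A i} : mk D f ≤ mk D g ↔ ∀ᶠ i in D, f i ≤ g i := by
  simp only [← inf_eq_left, mk_inf, mk_eq_mk_iff, Pi.inf_apply]

theorem mk_bot : mk D (⊥ : ∀ i, A i) = ⊥ := rfl

theorem mk_eq_bot_iff {f : ∀ i, A i} : mk D f = ⊥ ↔ ∀ᶠ i in D, f i = ⊥ := by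
  rw [← mk_bot, mk_eq_mk_iff]
  rfl

theorem isDenseFamily_mk {β : ι → Type*} [∀ i, Nonempty (β i)] {F : ∀ i, β i → A i}
    (hF : ∀ i, IsDenseFamily (F i)) :
    IsDenseFamily fun f : (∀ i, β i) => mk D fun i => F i (f i) := by
  refine ⟨fun f hf => ?_, fun a ha => ?_⟩
  · obtain ⟨i, hi⟩ := (mk_eq_bot_iff.1 hf).exists
    exact (hF i).1 _ hi
  obtain ⟨g, rfl⟩ := mk_surjective a
  have hg : ∀ᶠ i in D, g i ≠ ⊥ := Ultrafilter.eventually_not.2 (mt mk_eq_bot_iff.2 ha)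
  choose r hr using fun i => (hF i).exists_selector_le
  exact ⟨fun i => r i (g i), mk_le_mk_iff.2 (hg.mono fun i hi => hr i _ hi)⟩

end BUP

/-- Problem 12, easy inequality: the algebraic density of a Boolean ultraproduct is at
most the cardinality of the ultraproduct of the algebraic densities. -/
theorem piDensity_ultraproduct_le {ι : Type u} (D : Ultrafilter ι) (A : ι → Type u)
    [∀ i, BooleanAlgebra (A i)] [∀ i, Infinite (A i)] :
    piDensity (BUP D A) ≤ cardUP D (fun i => piDensity (A i)) := by
  choose F hF using fun i => exists_isDenseFamily_toType_ord_piDensity (A i)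
  have : ∀ i, Nonempty (piDensity (A i)).ord.ToType := fun i => (hF i).nonempty
  let G : Quotient (cardSetoid D fun i => piDensity (A i)) → BUP D A :=
    Quotient.lift (fun f => BUP.mk D fun i => F i (f i)) fun _ _ hfg =>
      BUP.mk_eq_mk_iff.2 (Filter.Eventually.mono hfg fun i hi => congrArg (F i) hi)
  exact (IsDenseFamily.of_comp Quotient.mk_surjective (F := G)
    (BUP.isDenseFamily_mk hF)).piDensity_le_mk
end

section
/- Let Fr(w) be the free Boolean algebra on generators {u_i : i ∈ w}, let E be a set of finite partial functions e : w ⇀ {0,1}, let q_e = ∏_{e(i)=1} u_i · ∏_{e(i)=0} ¬u_i, let N be the ideal generated by {q_e : e ∈ E}, and let x_i denote the image of u_i in Fr(w)/N. Then for any total function g : w → {0,1}, the set {x_i : g(i)=1} ∪ {¬x_i : g(i)=0} has the finite intersection property in Fr(w)/N (and hence extends to an ultrafilter) if and only if no e ∈ E is extended by g. -/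
/-- The elements of the Boolean subalgebra generated by a set `S`
(closure under `⊥`, `⊔` and complementation). -/
inductive BAGen {α : Type v} [BooleanAlgebra α] (S : Set α) : α → Prop
  | base {a : α} : a ∈ S → BAGen S a
  | bot : BAGen S ⊥
  | sup {a b : α} : BAGen S a → BAGen S b → BAGen S (a ⊔ b)
  | compl {a : α} : BAGen S a → BAGen S aᶜ

/-! If `g` disagrees with every `e ∈ F` somewhere on `dom e`, then the elementary product of `g`
over `s ∪ ⋃_{e ∈ F} dom e` is disjoint from every `q_e`, `e ∈ F`; lying below their join, it
vanishes, which independence of the generators forbids. Conversely, if `g` extends `e ∈ E`,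
the elementary product of `g` over `dom e` is `q_e`, which the quotient map kills. -/

section ElemProd

variable {ι α β : Type*} [BooleanAlgebra α]

/-- The paper's `q_e` is `elemProd u e.1 e.2`. -/
def elemProd (u : ι → α) (s : Finset ι) (f : ι → Bool) : α :=
  s.inf fun i => if f i then u i else (u i)ᶜ

theorem map_elemProd [BooleanAlgebra β] (c : BoundedLatticeHom α β) (u : ι → α)
    (s : Finset ι) (f : ι → Bool) :
    c (elemProd u s f) = elemProd (fun i => c (u i)) s f := by
  rw [elemProd, map_finset_inf]
  refine Finset.inf_congr rfl fun i _ => ?_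
  cases hf : f i <;> simp [hf]

theorem elemProd_congr (u : ι → α) {s : Finset ι} {f g : ι → Bool}
    (h : ∀ i ∈ s, f i = g i) : elemProd u s f = elemProd u s g :=
  Finset.inf_congr rfl fun i hi => by rw [h i hi]

theorem elemProd_anti (u : ι → α) {s t : Finset ι} (hst : s ⊆ t) (f : ι → Bool) :
    elemProd u t f ≤ elemProd u s f :=
  Finset.inf_mono hst

theorem disjoint_elemProd (u : ι → α) {s t : Finset ι} {f g : ι → Bool} {i : ι}
    (his : i ∈ s) (hit : i ∈ t) (hfg : f i ≠ g i) :
    Disjoint (elemProd u s f) (elemProd u t g) := by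
  refine Disjoint.mono (Finset.inf_le his) (Finset.inf_le hit) ?_
  cases hf : f i <;> cases hg : g i <;> simp_all [disjoint_compl_left, disjoint_compl_right]

theorem elemProd_eq_inf_inf (u : ι → α) (s : Finset ι) (f : ι → Bool) :
    elemProd u s f =
      (s.filter fun i => f i).inf u ⊓ (s.filter fun i => ¬ f i).inf fun i => (u i)ᶜ := by
  classical
  conv_lhs => rw [elemProd, ← Finset.filter_union_filter_not_eq (fun i => f i = true) s]
  rw [Finset.inf_union]
  congr 1 <;> refine Finset.inf_congr rfl fun i hi => ?_ <;> simp_all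

variable {u : ι → α}
  (hind : ∀ s t : Finset ι, (∀ i ∈ s, i ∉ t) → s.inf u ⊓ t.inf (fun i => (u i)ᶜ) ≠ ⊥)
include hind

theorem elemProd_ne_bot (s : Finset ι) (f : ι → Bool) : elemProd u s f ≠ ⊥ := by
  rw [elemProd_eq_inf_inf]
  refine hind _ _ fun i hi hi' => ?_
  simp only [Finset.mem_filter] at hi hi'
  exact hi'.2 hi.2

theorem not_elemProd_le_sup {g : ι → Bool} {F : Finset (Finset ι × (ι → Bool))}
    (hF : ∀ e ∈ F, ∃ i ∈ e.1, g i ≠ e.2 i) (s : Finset ι) :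
    ¬ elemProd u s g ≤ F.sup fun e => elemProd u e.1 e.2 := by
  intro hle
  classical
  set t := s ∪ F.sup Prod.fst
  have hdisj : ∀ e ∈ F, Disjoint (elemProd u t g) (elemProd u e.1 e.2) := fun e he => by
    obtain ⟨i, hi, hne⟩ := hF e he
    have hit : i ∈ t := Finset.mem_union_right _ (Finset.le_sup (f := Prod.fst) he hi)
    exact disjoint_elemProd u hit hi hne
  refine elemProd_ne_bot hind t g (disjoint_self.mp ?_)
  exact Finset.disjoint_sup_right.mpr hdisj |>.mono_right
    ((elemProd_anti u Finset.subset_union_left g).trans hle)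

end ElemProd

theorem fip_iff_no_extension_general {w Fr Q : Type u} [BooleanAlgebra Fr] [BooleanAlgebra Q]
    (u : w → Fr)
    (hind : ∀ s t : Finset w, (∀ i ∈ s, i ∉ t) →
      s.inf u ⊓ t.inf (fun i => (u i)ᶜ) ≠ ⊥)
    (E : Set (Finset w × (w → Bool)))
    (c : BoundedLatticeHom Fr Q)
    (hker : ∀ a : Fr, c a = ⊥ ↔ ∃ F : Finset (Finset w × (w → Bool)), ↑F ⊆ E ∧
      a ≤ F.sup (fun e => e.1.inf (fun i => if e.2 i then u i else (u i)ᶜ)))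
    (g : w → Bool) :
    (∀ s : Finset w, s.inf (fun i => if g i then c (u i) else (c (u i))ᶜ) ≠ ⊥) ↔
      ¬ ∃ e ∈ E, ∀ i ∈ e.1, g i = e.2 i := by
  change (∀ s, elemProd (fun i => c (u i)) s g ≠ ⊥) ↔ _
  simp only [← map_elemProd, ne_eq, hker, not_exists, not_and]
  constructor
  · intro hfip e heE hext
    refine hfip e.1 {e} (by simpa using heE) ?_
    rw [Finset.sup_singleton]
    exact (elemProd_congr u hext).le
  · intro hno s F hFE hle
    refine not_elemProd_le_sup hind (fun e he => ?_) s hle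
    by_contra! hext
    exact hno e (hFE he) hext

/-- Remark 3.1: Let `Fr` be the free Boolean algebra on independent generators
`u i`, `i ∈ w`, `E` a set of finite partial functions `w ⇀ Bool` (coded as pairs of a
finite domain and a value function), and `c : Fr → Q` the quotient map by the ideal
generated by the elementary products `q_e`, `e ∈ E`. Then for a total `g : w → Bool`,
the family `{x i : g i = 1} ∪ {(x i)ᶜ : g i = 0}` (where `x i = c (u i)`) has the finite
intersection property iff no `e ∈ E` is extended by `g`. -/
theorem fip_iff_no_extension {w Fr Q : Type u} [BooleanAlgebra Fr] [BooleanAlgebra Q]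
    (u : w → Fr)
    (hind : ∀ s t : Finset w, (∀ i ∈ s, i ∉ t) →
      s.inf u ⊓ t.inf (fun i => (u i)ᶜ) ≠ ⊥)
    (hgen : ∀ a : Fr, BAGen (Set.range u) a)
    (E : Set (Finset w × (w → Bool)))
    (c : BoundedLatticeHom Fr Q) (hsurj : Function.Surjective c)
    (hker : ∀ a : Fr, c a = ⊥ ↔ ∃ F : Finset (Finset w × (w → Bool)), ↑F ⊆ E ∧
      a ≤ F.sup (fun e => e.1.inf (fun i => if e.2 i then u i else (u i)ᶜ)))
    (g : w → Bool) :
    (∀ s : Finset w, s.inf (fun i => if g i then c (u i) else (c (u i))ᶜ) ≠ ⊥) ↔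
      ¬ ∃ e ∈ E, ∀ i ∈ e.1, g i = e.2 i :=
  fip_iff_no_extension_general u hind E c hker g
end

section
/- Let h : C → D be a Boolean algebra homomorphism, {c_n : n ∈ ω} a countable partition of unity in C such that {h(c_n) : n ∈ ω} is a partition of unity in D. If (x_n)_{n∈ω} are elements of C such that the supremum s = ⋁_{n∈ω} x_n·c_n exists in C, then h(s) = ⋁_{n∈ω} h(x_n·c_n), with the supremum existing in D. -/
/-!
Since the `c n` are disjoint, `s ≤ c n ⇨ x n` for every `n`, so `s ⊓ c n = x n ⊓ c n`.
Hence `h s ⊓ h (c n) = h (x n ⊓ c n)`, and an upper bound `d` of these elements satisfies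
`h (c n) ≤ h s ⇨ d` for all `n`; as the `h (c n)` have supremum `⊤`, this forces `h s ≤ d`.
-/

section HeytingAlgebra

open Function

variable {α ι : Type*} [HeytingAlgebra α]

theorem IsLUB.inf_eq_of_pairwise_disjoint {c x : ι → α} {s : α}
    (hc : Pairwise (Disjoint on c)) (hs : IsLUB (Set.range fun i => x i ⊓ c i) s) (i : ι) :
    s ⊓ c i = x i ⊓ c i := by
  refine le_antisymm ?_ (le_inf (hs.1 ⟨i, rfl⟩) inf_le_right)
  have hs_le : s ≤ c i ⇨ x i := by
    refine hs.2 ?_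
    rintro _ ⟨j, rfl⟩
    rw [le_himp_iff]
    rcases eq_or_ne j i with rfl | hji
    · exact inf_le_left.trans inf_le_left
    · have hcij : c j ⊓ c i = ⊥ := disjoint_iff.1 (hc hji)
      simp [inf_assoc, hcij]
  exact le_inf (le_himp_iff.1 hs_le) inf_le_right

theorem le_of_forall_inf_le_of_isLUB_top {e : ι → α} (he : IsLUB (Set.range e) ⊤) {a d : α}
    (had : ∀ i, a ⊓ e i ≤ d) : a ≤ d := by
  have htop : ⊤ ≤ a ⇨ d := he.2 <| by
    rintro _ ⟨i, rfl⟩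
    exact le_himp_iff'.2 (had i)
  exact himp_eq_top_iff.1 (top_le_iff.1 htop)

end HeytingAlgebra

theorem hom_map_sup_of_partition_general {C D : Type u} [BooleanAlgebra C] [BooleanAlgebra D]
    (h : BoundedLatticeHom C D) (c : ℕ → C)
    (hdisj : Pairwise fun n m => c n ⊓ c m = ⊥)
    (hlubD : IsLUB (Set.range fun n => h (c n)) ⊤)
    (x : ℕ → C) (s : C)
    (hs : IsLUB (Set.range fun n => x n ⊓ c n) s) :
    IsLUB (Set.range fun n => h (x n ⊓ c n)) (h s) := by
  have hs_inf : ∀ n, s ⊓ c n = x n ⊓ c n :=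
    hs.inf_eq_of_pairwise_disjoint fun _ _ hnm => disjoint_iff.2 (hdisj hnm)
  refine ⟨?_, fun d hd => ?_⟩
  · rintro _ ⟨n, rfl⟩
    exact OrderHomClass.mono h (hs.1 ⟨n, rfl⟩)
  · refine le_of_forall_inf_le_of_isLUB_top hlubD fun n => ?_
    rw [← map_inf, hs_inf n]
    exact hd ⟨n, rfl⟩

/-- Lemma 8.1: if `h : C → D` is a Boolean algebra homomorphism, `(c n)` is a countable
partition of unity in `C` whose image is a partition of unity in `D`, and
`s = ⋁ₙ xₙ ⊓ cₙ` exists in `C`, then `h s = ⋁ₙ h (xₙ ⊓ cₙ)` (the supremum existing). -/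
theorem hom_map_sup_of_partition {C D : Type u} [BooleanAlgebra C] [BooleanAlgebra D]
    (h : BoundedLatticeHom C D) (c : ℕ → C)
    (hdisj : Pairwise fun n m => c n ⊓ c m = ⊥)
    (hlub : IsLUB (Set.range c) ⊤)
    (hlubD : IsLUB (Set.range fun n => h (c n)) ⊤)
    (x : ℕ → C) (s : C)
    (hs : IsLUB (Set.range fun n => x n ⊓ c n) s) :
    IsLUB (Set.range fun n => h (x n ⊓ c n)) (h s) :=
  hom_map_sup_of_partition_general h c hdisj hlubD x s hs
end
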